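/- If K₁ ⊂ K₂ or K₁ ≺ K₂ (K₁ is a quotient hull of K₂), then hcap(K₁) ≤ hcap(K₂). -/

import Mathlib

open Set Filter

/-- The open upper half-plane. -/
def UHalf : Set ℂ := {z : ℂ | 0 < z.im}

/-- `K` is an `ℍ`-hull: bounded, relatively closed in `ℍ`, with simply connected complement
`ℍ ∖ K`. -/
structure IsHHull (K : Set ℂ) : Prop where
  subset : K ⊆ UHalf
  bounded : Bornology.IsBounded K
  rel_closed : closure K ∩ UHalf = K
  simply_connected : SimplyConnectedSpace (UHalf \ K : Set ℂ)

/-- `g` is the normalized Loewner map of the `ℍ`-hull `K`, with half-plane capacity `c`: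
a conformal bijection of `ℍ ∖ K` onto `ℍ` with `g(z) = z + c/z + o(1/z)` at `∞`. -/
structure IsLoewnerMapOf (K : Set ℂ) (g : ℂ → ℂ) (c : ℝ) : Prop where
  diff : DifferentiableOn ℂ g (UHalf \ K)
  inj : InjOn g (UHalf \ K)
  image : g '' (UHalf \ K) = UHalf
  norm : Tendsto (fun z => z * (g z - z))
    ((Bornology.cobounded ℂ) ⊓ Filter.principal UHalf) (nhds (c : ℂ))

/-!
If `ψ : ℍ ∖ K₂ → ℍ` is holomorphic with `ψ(z) = z + c/z + o(1/z)`, then `F = ψ ∘ g_{K₂}⁻¹` is a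
holomorphic self-map of `ℍ` with `F(w) = w + (c - hcap K₂)/w + o(1/w)` along `iℝ` (the inverse
`g_{K₂}⁻¹` is holomorphic and, by Schwarz–Pick, asymptotic to the identity there). Schwarz–Pick
also gives `Im F(2iy) ≤ 2 Im F(iy)`, which forces `c ≤ hcap K₂`. For `K₁ ⊆ K₂` take `ψ = g_{K₁}`;
for `K₁ = K₂/K₀` take `ψ = g_{K₁} ∘ g_{K₀}`, whose capacity is `hcap K₀ + hcap K₁`, and
`hcap K₀ ≥ 0` by taking `ψ = id`.
-/

open Complex Metric Bornology
open scoped ComplexConjugate Topology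

lemma mem_uHalf {z : ℂ} : z ∈ UHalf ↔ 0 < z.im := Iff.rfl

lemma isOpen_uHalf : IsOpen UHalf := isOpen_lt continuous_const continuous_im

lemma sub_conj_ne_zero {u z : ℂ} (hu : u ∈ UHalf) (hz : z ∈ UHalf) : z - conj u ≠ 0 := by
  intro h
  have := congrArg im h
  simp only [sub_im, conj_im, zero_im] at this
  linarith [show 0 < u.im from hu, show 0 < z.im from hz]

noncomputable def halfPlaneToDisc (u z : ℂ) : ℂ := (z - u) / (z - conj u)

noncomputable def discToHalfPlane (u ζ : ℂ) : ℂ := (u - conj u * ζ) / (1 - ζ)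

lemma halfPlaneToDisc_self (u : ℂ) : halfPlaneToDisc u u = 0 := by
  simp [halfPlaneToDisc]

lemma discToHalfPlane_zero (u : ℂ) : discToHalfPlane u 0 = u := by
  simp [discToHalfPlane]

lemma norm_halfPlaneToDisc_lt_one {u z : ℂ} (hu : u ∈ UHalf) (hz : z ∈ UHalf) :
    ‖halfPlaneToDisc u z‖ < 1 := by
  have hne := sub_conj_ne_zero hu hz
  rw [halfPlaneToDisc, norm_div, div_lt_one (norm_pos_iff.2 hne), ← sq_lt_sq₀ (norm_nonneg _)
    (norm_nonneg _), Complex.sq_norm, Complex.sq_norm]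
  simp only [normSq_apply, sub_re, sub_im, conj_re, conj_im]
  nlinarith [show 0 < u.im from hu, show 0 < z.im from hz]

lemma one_sub_ne_zero_of_norm_lt_one {ζ : ℂ} (hζ : ‖ζ‖ < 1) : 1 - ζ ≠ 0 := by
  rw [sub_ne_zero]
  rintro rfl
  simp at hζ

lemma discToHalfPlane_mem {u ζ : ℂ} (hu : u ∈ UHalf) (hζ : ‖ζ‖ < 1) :
    discToHalfPlane u ζ ∈ UHalf := by
  have hne := one_sub_ne_zero_of_norm_lt_one hζ
  have hζ2 : normSq ζ < 1 := by rw [← Complex.sq_norm]; nlinarith [norm_nonneg ζ]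
  have key : (discToHalfPlane u ζ).im = u.im * (1 - normSq ζ) / normSq (1 - ζ) := by
    rw [discToHalfPlane, div_im]
    simp only [normSq_apply, sub_re, sub_im, mul_re, mul_im, conj_re, conj_im, one_re, one_im]
    ring
  rw [mem_uHalf, key]
  exact div_pos (mul_pos hu (by linarith)) (normSq_pos.2 hne)

lemma discToHalfPlane_halfPlaneToDisc {u z : ℂ} (hu : u ∈ UHalf) (hz : z ∈ UHalf) :
    discToHalfPlane u (halfPlaneToDisc u z) = z := by
  have h1 := sub_conj_ne_zero hu hz
  have h2 : u - conj u ≠ 0 := sub_conj_ne_zero hu hu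
  have hnum : u - conj u * halfPlaneToDisc u z = z * (u - conj u) / (z - conj u) := by
    rw [halfPlaneToDisc]; field_simp; ring
  have hden : 1 - halfPlaneToDisc u z = (u - conj u) / (z - conj u) := by
    rw [halfPlaneToDisc]; field_simp; ring
  rw [discToHalfPlane, hnum, hden]
  field_simp

lemma differentiableOn_halfPlaneToDisc (u : ℂ) (hu : u ∈ UHalf) :
    DifferentiableOn ℂ (halfPlaneToDisc u) UHalf :=
  (differentiableOn_id.sub_const u).div (differentiableOn_id.sub_const _)
    fun _ hz => sub_conj_ne_zero hu hz

lemma differentiableOn_discToHalfPlane (u : ℂ) :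
    DifferentiableOn ℂ (discToHalfPlane u) (ball 0 1) :=
  ((differentiableOn_const u).sub (differentiableOn_id.const_mul _)).div
    ((differentiableOn_const 1).sub differentiableOn_id)
    fun _ hζ => one_sub_ne_zero_of_norm_lt_one (mem_ball_zero_iff.1 hζ)

/-- The Schwarz–Pick lemma on the upper half-plane. -/
theorem norm_halfPlaneToDisc_map_le {f : ℂ → ℂ} (hd : DifferentiableOn ℂ f UHalf)
    (hm : MapsTo f UHalf UHalf) {u v : ℂ} (hu : u ∈ UHalf) (hv : v ∈ UHalf) :
    ‖halfPlaneToDisc (f u) (f v)‖ ≤ ‖halfPlaneToDisc u v‖ := by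
  have hin : MapsTo (discToHalfPlane u) (ball 0 1) UHalf := fun ζ hζ =>
    discToHalfPlane_mem hu (mem_ball_zero_iff.1 hζ)
  set G : ℂ → ℂ := fun ζ => halfPlaneToDisc (f u) (f (discToHalfPlane u ζ))
  have hGd : DifferentiableOn ℂ G (ball 0 1) :=
    (differentiableOn_halfPlaneToDisc _ (hm hu)).comp
      (hd.comp (differentiableOn_discToHalfPlane u) hin) (hm.comp hin)
  have hGm : MapsTo G (ball 0 1) (closedBall 0 1) := fun ζ hζ =>
    mem_closedBall_zero_iff.2 (norm_halfPlaneToDisc_lt_one (hm hu) (hm (hin hζ))).le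
  have hG0 : G 0 = 0 := by simp only [G, discToHalfPlane_zero, halfPlaneToDisc_self]
  have := Complex.norm_le_norm_of_mapsTo_ball hGd hGm hG0 (norm_halfPlaneToDisc_lt_one hu hv)
  simpa only [G, discToHalfPlane_halfPlaneToDisc hu hv] using this

lemma norm_sub_conj_le (a b : ℂ) : ‖a - conj b‖ ≤ ‖a - b‖ + 2 * |b.im| := by
  calc ‖a - conj b‖ = ‖(a - b) + (b - conj b)‖ := by rw [sub_add_sub_cancel]
    _ ≤ ‖a - b‖ + ‖b - conj b‖ := norm_add_le _ _
    _ = ‖a - b‖ + 2 * |b.im| := by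
      rw [sub_conj, norm_mul, norm_I, mul_one, norm_real, Real.norm_eq_abs, abs_mul,
        abs_two]

theorem norm_map_sub_mul_le {f : ℂ → ℂ} (hd : DifferentiableOn ℂ f UHalf)
    (hm : MapsTo f UHalf UHalf) {u v : ℂ} (hu : u ∈ UHalf) (hv : v ∈ UHalf) :
    ‖f v - f u‖ * ‖v - conj u‖ ≤ ‖v - u‖ * (‖f v - f u‖ + 2 * (f u).im) := by
  have hpick := norm_halfPlaneToDisc_map_le hd hm hu hv
  rw [halfPlaneToDisc, halfPlaneToDisc, norm_div, norm_div,
    div_le_div_iff₀ (norm_pos_iff.2 (sub_conj_ne_zero (hm hu) (hm hv)))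
      (norm_pos_iff.2 (sub_conj_ne_zero hu hv))] at hpick
  calc ‖f v - f u‖ * ‖v - conj u‖ ≤ ‖v - u‖ * ‖f v - conj (f u)‖ := hpick
    _ ≤ ‖v - u‖ * (‖f v - f u‖ + 2 * (f u).im) := by
      gcongr
      simpa only [abs_of_pos (mem_uHalf.1 (hm hu))] using norm_sub_conj_le (f v) (f u)

lemma I_mul_ofReal_mem_uHalf {y : ℝ} (hy : 0 < y) : I * y ∈ UHalf := by
  simpa [mem_uHalf] using hy

lemma im_map_I_mul_two_mul_le {f : ℂ → ℂ} (hd : DifferentiableOn ℂ f UHalf)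
    (hm : MapsTo f UHalf UHalf) {y : ℝ} (hy : 0 < y) :
    (f (I * ↑(2 * y))).im ≤ 2 * (f (I * y)).im := by
  have hpick := norm_map_sub_mul_le hd hm (I_mul_ofReal_mem_uHalf hy)
    (I_mul_ofReal_mem_uHalf (by positivity : 0 < 2 * y))
  have h3y : ‖I * ↑(2 * y) - conj (I * y)‖ = 3 * y := by
    rw [map_mul, conj_I, conj_ofReal, show I * ↑(2 * y) - -I * y = I * ↑(3 * y) by push_cast; ring,
      norm_mul, norm_I, one_mul, norm_real, Real.norm_of_nonneg (by positivity)]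
  have hy' : ‖I * ↑(2 * y) - I * y‖ = y := by
    rw [show I * ↑(2 * y) - I * y = I * y by push_cast; ring, norm_mul, norm_I, one_mul,
      norm_real, Real.norm_of_nonneg hy.le]
  rw [h3y, hy'] at hpick
  have hnear : ‖f (I * ↑(2 * y)) - f (I * y)‖ ≤ (f (I * y)).im := by nlinarith
  have := (abs_le.1 ((abs_im_le_norm _).trans hnear)).2
  rw [sub_im] at this
  linarith

theorem nonpos_of_tendsto_I_mul_mul_sub {F : ℂ → ℂ} (hd : DifferentiableOn ℂ F UHalf)
    (hm : MapsTo F UHalf UHalf) {L : ℝ}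
    (hL : Tendsto (fun y : ℝ => I * y * (F (I * y) - I * y)) atTop (𝓝 L)) : L ≤ 0 := by
  set h : ℝ → ℝ := fun y => y * (y - (F (I * y)).im)
  have hh : Tendsto h atTop (𝓝 L) := by
    refine ((continuous_re.tendsto _).comp hL).congr fun y => ?_
    simp only [Function.comp_apply, mul_re, I_re, ofReal_re, zero_mul, I_im, ofReal_im, mul_zero,
      sub_self, sub_re, sub_zero, mul_im, one_mul, zero_add, sub_im, zero_sub, h]
    ring
  -- `h (2y) - 4 h y = 2y (2 Im F(iy) - Im F(2iy))` is nonnegative but tends to `-3L`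
  have hlim : Tendsto (fun y => h (2 * y) - 4 * h y) atTop (𝓝 (L - 4 * L)) :=
    (hh.comp (tendsto_id.const_mul_atTop two_pos)).sub (hh.const_mul 4)
  have hnonneg : ∀ᶠ y in atTop, 0 ≤ h (2 * y) - 4 * h y := by
    filter_upwards [eventually_gt_atTop 0] with y hy
    have := im_map_I_mul_two_mul_le hd hm hy
    simp only [h]
    nlinarith
  linarith [ge_of_tendsto hlim hnonneg]

lemma norm_map_I_mul_sub_le {f : ℂ → ℂ} (hd : DifferentiableOn ℂ f UHalf)
    (hm : MapsTo f UHalf UHalf) {u : ℂ} (hu : u ∈ UHalf) {y : ℝ} (hy : 0 < y)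
    (hfu : f u = I * y) (hclose : 2 * ‖I * y - u‖ ≤ y) :
    ‖f (I * y) - I * y‖ ≤ 4 * ‖I * y - u‖ := by
  have hpick := norm_map_sub_mul_le hd hm hu (I_mul_ofReal_mem_uHalf hy)
  rw [hfu] at hpick
  have hfar : y ≤ ‖I * y - conj u‖ := by
    refine le_trans ?_ ((le_abs_self _).trans (abs_im_le_norm _))
    simp only [sub_im, mul_im, I_re, I_im, ofReal_re, ofReal_im, conj_im]
    linarith [mem_uHalf.1 hu]
  have him : (I * (y : ℂ)).im = y := by simp
  rw [him] at hpick
  nlinarith [norm_nonneg (f (I * y) - I * y), norm_nonneg (I * y - u)]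

section InverseFunction

open Function

variable {D : Set ℂ} {g : ℂ → ℂ}

lemma isOpenMap_domRestrict_of_injOn (hD : IsOpen D) (hDc : IsPreconnected D)
    (hd : DifferentiableOn ℂ g D) (hi : InjOn g D) : IsOpenMap (D.domRestrict g) := by
  intro t ht
  have hsD : Subtype.val '' t ⊆ D := Subtype.coe_image_subset D t
  have hs : IsOpen (Subtype.val '' t) := hD.isOpenMap_subtype_val t ht
  rw [domRestrict_eq, image_comp]
  rcases (hd.analyticOnNhd hD).is_constant_or_isOpen hDc with ⟨w, hw⟩ | hopen
  · -- a constant injective map has a subsingleton domain, and `ℂ` has no isolated points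
    have hsub : (Subtype.val '' t).Subsingleton := fun a ha b hb =>
      hi (hsD ha) (hsD hb) (by rw [hw a (hsD ha), hw b (hsD hb)])
    rcases (Subtype.val '' t).eq_empty_or_nonempty with he | ⟨x, hx⟩
    · simp [he]
    · exact absurd hsub.finite (infinite_of_mem_nhds x (hs.mem_nhds hx))
  · exact hopen _ hsD hs

lemma countable_setOf_deriv_eq_zero (hD : IsOpen D) (hDc : IsPreconnected D)
    (hd : DifferentiableOn ℂ g D) (hi : InjOn g D) : {z ∈ D | deriv g z = 0}.Countable := by
  rcases ((hd.analyticOnNhd hD).deriv).eqOn_zero_or_eventually_ne_zero_of_preconnected hDc with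
    hzero | hcodiscrete
  · refine Subsingleton.countable fun a ha b hb => hi ha.1 hb.1 ?_
    exact hD.is_const_of_deriv_eq_zero hDc hd hzero ha.1 hb.1
  · have := (HereditarilyLindelofSpace.isLindelof _).countable_of_isDiscrete
      (isDiscrete_of_codiscreteWithin (s := {z | deriv g z = 0}) (U := D) hcodiscrete)
    simpa [inter_comm, ofPred_and] using this

lemma differentiableOn_of_differentiableAt_off_countable {U S : Set ℂ} {f : ℂ → ℂ}
    (hU : IsOpen U) (hS : S.Countable) (hc : ContinuousOn f U)
    (hd : ∀ z ∈ U \ S, DifferentiableAt ℂ f z) : DifferentiableOn ℂ f U := by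
  intro w hw
  obtain ⟨r, hr, hsub⟩ := nhds_basis_closedBall.mem_iff.1 (hU.mem_nhds hw)
  have hr' : (r.toNNReal : ℝ) = r := Real.coe_toNNReal r hr.le
  have hps := Complex.hasFPowerSeriesOnBall_of_differentiable_off_countable (R := r.toNNReal)
    hS (by rw [hr']; exact hc.mono hsub)
    (fun z hz => hd z ⟨hsub (ball_subset_closedBall (hr' ▸ hz.1)), hz.2⟩)
    (by simpa using hr)
  exact hps.analyticAt.differentiableAt.differentiableWithinAt

theorem differentiableOn_invFunOn_image (hD : IsOpen D) (hDc : IsPreconnected D)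
    (hd : DifferentiableOn ℂ g D) (hi : InjOn g D) :
    DifferentiableOn ℂ (invFunOn g D) (g '' D) := by
  have hopen := isOpenMap_domRestrict_of_injOn hD hDc hd hi
  have hcont : ContinuousOn (invFunOn g D) (g '' D) :=
    hopen.continuousOn_image_of_leftInvOn hi.leftInvOn_invFunOn
  have himage : IsOpen (g '' D) := by
    simpa [range_comp] using hopen univ isOpen_univ
  -- off the images of the critical points, the inverse function theorem applies
  refine differentiableOn_of_differentiableAt_off_countable himage
    ((countable_setOf_deriv_eq_zero hD hDc hd hi).image g) hcont ?_
  rintro w ⟨hw, hwS⟩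
  have hmem : invFunOn g D w ∈ D := invFunOn_mem hw
  have hgw : g (invFunOn g D w) = w := invFunOn_eq hw
  have hderiv : deriv g (invFunOn g D w) ≠ 0 := fun h0 => hwS ⟨_, ⟨hmem, h0⟩, hgw⟩
  refine (HasDerivAt.of_local_left_inverse (hcont.continuousAt (himage.mem_nhds hw))
    (hd.differentiableAt (hD.mem_nhds hmem)).hasDerivAt hderiv ?_).differentiableAt
  filter_upwards [himage.mem_nhds hw] with v hv using invFunOn_eq hv

end InverseFunction

lemma tendsto_cobounded_of_isBoundedUnder_norm_sub {α E : Type*} [SeminormedAddCommGroup E]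
    {l : Filter α} {u v : α → E} (hu : Tendsto u l (cobounded E))
    (hb : IsBoundedUnder (· ≤ ·) l fun x => ‖u x - v x‖) : Tendsto v l (cobounded E) := by
  rw [← tendsto_norm_atTop_iff_cobounded] at hu ⊢
  obtain ⟨C, hC⟩ := hb.eventually_le
  refine tendsto_atTop_mono' _ ?_ (tendsto_atTop_add_const_right _ (-C) hu)
  filter_upwards [hC] with x hx
  linarith [norm_sub_norm_le (u x) (v x)]

namespace IsHHull

variable {K : Set ℂ}

lemma isOpen_diff (hK : IsHHull K) : IsOpen (UHalf \ K) := by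
  have : UHalf \ K = UHalf ∩ (closure K)ᶜ := by
    ext z
    refine ⟨fun ⟨hz, hzK⟩ => ⟨hz, fun hc => hzK ?_⟩, fun ⟨hz, hc⟩ => ⟨hz, fun hzK => hc ?_⟩⟩
    · rw [← hK.rel_closed]; exact ⟨hc, hz⟩
    · exact subset_closure hzK
  rw [this]
  exact isOpen_uHalf.inter isClosed_closure.isOpen_compl

lemma isPreconnected_diff (hK : IsHHull K) : IsPreconnected (UHalf \ K) := by
  have := hK.simply_connected
  exact (isPathConnected_iff_pathConnectedSpace.2 inferInstance).isConnected.isPreconnected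

lemma tendsto_I_mul (hK : IsHHull K) :
    Tendsto (fun y : ℝ => I * y) atTop (cobounded ℂ ⊓ 𝓟 (UHalf \ K)) := by
  have hcob : Tendsto (fun y : ℝ => I * y) atTop (cobounded ℂ) :=
    (tendsto_mul_left_cobounded I_ne_zero).comp (RCLike.tendsto_ofReal_atTop_cobounded ℂ)
  refine tendsto_inf.2 ⟨hcob, tendsto_principal.2 ?_⟩
  filter_upwards [eventually_gt_atTop 0, hcob.eventually (isBounded_def.1 hK.bounded)]
    with y hy hyK using ⟨I_mul_ofReal_mem_uHalf hy, hyK⟩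

end IsHHull

lemma IsLoewnerMapOf.mapsTo {K : Set ℂ} {g : ℂ → ℂ} {c : ℝ} (hg : IsLoewnerMapOf K g c) :
    MapsTo g (UHalf \ K) UHalf :=
  fun _ hz => hg.image ▸ mem_image_of_mem g hz

lemma IsLoewnerMapOf.tendsto_sub {K : Set ℂ} {g : ℂ → ℂ} {c : ℝ} (hg : IsLoewnerMapOf K g c) :
    Tendsto (fun z => g z - z) (cobounded ℂ ⊓ 𝓟 UHalf) (𝓝 0) :=
  tendsto_zero_of_isBoundedUnder_smul_of_tendsto_cobounded (K := ℂ) (R := ℂ) (f := id)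
    hg.norm.norm.isBoundedUnder_le (tendsto_id.mono_left inf_le_left)

theorem IsLoewnerMapOf.le_of_tendsto_mul_sub {K : Set ℂ} {g ψ : ℂ → ℂ} {c c' : ℝ}
    (hg : IsLoewnerMapOf K g c) (hK : IsHHull K) (hψd : DifferentiableOn ℂ ψ (UHalf \ K))
    (hψm : MapsTo ψ (UHalf \ K) UHalf)
    (hψ : Tendsto (fun z => z * (ψ z - z)) (cobounded ℂ ⊓ 𝓟 (UHalf \ K)) (𝓝 c')) : c' ≤ c := by
  set D := UHalf \ K
  have hl : cobounded ℂ ⊓ 𝓟 D ≤ cobounded ℂ ⊓ 𝓟 UHalf :=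
    inf_le_inf_left _ (principal_mono.2 sdiff_subset)
  set φ := Function.invFunOn g D
  have hφd : DifferentiableOn ℂ φ UHalf := hg.image ▸
    differentiableOn_invFunOn_image hK.isOpen_diff hK.isPreconnected_diff hg.diff hg.inj
  have hφD : MapsTo φ UHalf D := hg.image ▸ fun _ hw => Function.invFunOn_mem hw
  have hgφ : ∀ w ∈ UHalf, g (φ w) = w := hg.image ▸ fun _ hw => Function.invFunOn_eq hw
  have hφm : MapsTo φ UHalf UHalf := fun _ hw => (hφD hw).1
  -- along the imaginary axis `g`, and by Schwarz–Pick also `φ = g⁻¹`, is close to the identity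
  have hg_sub : Tendsto (fun y : ℝ => I * y - g (I * y)) atTop (𝓝 0) := by
    simpa using (hg.tendsto_sub.comp (hK.tendsto_I_mul.mono_right hl)).neg
  have hφ_sub : Tendsto (fun y : ℝ => φ (I * y) - I * y) atTop (𝓝 0) := by
    refine squeeze_zero_norm' ?_ (by simpa using (hg_sub.norm.const_mul 4))
    filter_upwards [eventually_ge_atTop 2,
      hK.tendsto_I_mul.eventually_mem (mem_inf_of_right (mem_principal_self D)),
      hg_sub.norm.eventually (ge_mem_nhds (by simp : ‖(0 : ℂ)‖ < 1))] with y hy hyD hsmall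
    exact norm_map_I_mul_sub_le hφd hφm (hg.mapsTo hyD) (by linarith)
      (hg.inj.leftInvOn_invFunOn hyD) (by linarith)
  have hφ_bdd : IsBoundedUnder (· ≤ ·) atTop fun y : ℝ => ‖φ (I * y) - I * y‖ :=
    hφ_sub.norm.isBoundedUnder_le
  have hφl : Tendsto (fun y : ℝ => φ (I * y)) atTop (cobounded ℂ ⊓ 𝓟 D) := by
    refine tendsto_inf.2 ⟨tendsto_cobounded_of_isBoundedUnder_norm_sub
      (hK.tendsto_I_mul.mono_right inf_le_left) ?_, tendsto_principal.2 ?_⟩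
    · simpa only [norm_sub_rev] using hφ_bdd
    · filter_upwards [eventually_gt_atTop 0] with y hy using hφD (I_mul_ofReal_mem_uHalf hy)
  have hF : Tendsto (fun y : ℝ => I * y * (ψ (φ (I * y)) - I * y)) atTop
      (𝓝 ((c' - c : ℝ) : ℂ)) := by
    have hdiff : Tendsto (fun y : ℝ => φ (I * y) * (ψ (φ (I * y)) - I * y)) atTop
        (𝓝 ((c' : ℂ) - c)) := by
      refine ((hψ.comp hφl).sub ((hg.norm.mono_left hl).comp hφl)).congr' ?_
      filter_upwards [eventually_gt_atTop 0] with y hy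
      simp only [Function.comp_apply, hgφ _ (I_mul_ofReal_mem_uHalf hy)]
      ring
    push_cast
    exact tendsto_smul_congr_of_tendsto_left_cobounded_of_isBoundedUnder hdiff
      (hφl.mono_right inf_le_left) hφ_bdd
  exact sub_nonpos.1 (nonpos_of_tendsto_I_mul_mul_sub (hψd.comp hφd hφD) (hψm.comp hφD) hF)

lemma IsLoewnerMapOf.tendsto_mul_comp_sub {K₀ K₁ : Set ℂ} {g₀ g₁ : ℂ → ℂ} {c₀ c₁ : ℝ}
    (hg₀ : IsLoewnerMapOf K₀ g₀ c₀) (hg₁ : IsLoewnerMapOf K₁ g₁ c₁) :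
    Tendsto (fun z => z * (g₁ (g₀ z) - z)) (cobounded ℂ ⊓ 𝓟 (UHalf \ K₀)) (𝓝 ↑(c₀ + c₁)) := by
  have hl : cobounded ℂ ⊓ 𝓟 (UHalf \ K₀) ≤ cobounded ℂ ⊓ 𝓟 UHalf :=
    inf_le_inf_left _ (principal_mono.2 sdiff_subset)
  have hbdd : IsBoundedUnder (· ≤ ·) (cobounded ℂ ⊓ 𝓟 (UHalf \ K₀)) fun z => ‖z - g₀ z‖ := by
    simpa only [norm_sub_rev] using (hg₀.tendsto_sub.mono_left hl).norm.isBoundedUnder_le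
  have hcob : Tendsto g₀ (cobounded ℂ ⊓ 𝓟 (UHalf \ K₀)) (cobounded ℂ) :=
    tendsto_cobounded_of_isBoundedUnder_norm_sub (tendsto_id.mono_left inf_le_left) hbdd
  have hg₀l : Tendsto g₀ (cobounded ℂ ⊓ 𝓟 (UHalf \ K₀)) (cobounded ℂ ⊓ 𝓟 UHalf) :=
    tendsto_inf.2 ⟨hcob, tendsto_principal.2 (mem_inf_of_right fun _ hz => hg₀.mapsTo hz)⟩
  have h₁ : Tendsto (fun z => z * (g₁ (g₀ z) - g₀ z)) (cobounded ℂ ⊓ 𝓟 (UHalf \ K₀)) (𝓝 c₁) :=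
    tendsto_smul_congr_of_tendsto_left_cobounded_of_isBoundedUnder (hg₁.norm.comp hg₀l) hcob
      (by simpa only [norm_sub_rev] using hbdd)
  push_cast
  exact ((hg₀.norm.mono_left hl).add h₁).congr fun z => by ring

lemma IsLoewnerMapOf.mapsTo_diff_image_diff {K₀ K₂ : Set ℂ} {g₀ : ℂ → ℂ} {c₀ : ℝ}
    (hg₀ : IsLoewnerMapOf K₀ g₀ c₀) (h₂ : IsHHull K₂) (hK₀₂ : K₀ ⊆ K₂) :
    MapsTo g₀ (UHalf \ K₂) (UHalf \ g₀ '' (K₂ \ K₀)) := by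
  have hsub : UHalf \ K₂ ⊆ UHalf \ K₀ := sdiff_subset_sdiff_right hK₀₂
  refine fun z hz => ⟨hg₀.mapsTo (hsub hz), ?_⟩
  rintro ⟨w, ⟨hwK₂, hwK₀⟩, hwz⟩
  exact hz.2 (hg₀.inj ⟨h₂.subset hwK₂, hwK₀⟩ (hsub hz) hwz ▸ hwK₂)

theorem hcap_mono_general
    (K1 K2 : Set ℂ) (g1 g2 : ℂ → ℂ) (c1 c2 : ℝ)
    (h2 : IsHHull K2)
    (hg1 : IsLoewnerMapOf K1 g1 c1) (hg2 : IsLoewnerMapOf K2 g2 c2) :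
    (K1 ⊆ K2 → c1 ≤ c2) ∧
    (∀ (K0 : Set ℂ) (g0 : ℂ → ℂ) (c0 : ℝ), IsHHull K0 → IsLoewnerMapOf K0 g0 c0 →
      K0 ⊆ K2 → K1 = g0 '' (K2 \ K0) → c1 ≤ c2) := by
  refine ⟨fun hK₁₂ => ?_, fun K0 g0 c0 h0 hg0 hK₀₂ hK₁ => ?_⟩
  · have hsub : UHalf \ K2 ⊆ UHalf \ K1 := sdiff_subset_sdiff_right hK₁₂
    exact hg2.le_of_tendsto_mul_sub h2 (hg1.diff.mono hsub) (hg1.mapsTo.mono_left hsub)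
      (hg1.norm.mono_left (inf_le_inf_left _ (principal_mono.2 sdiff_subset)))
  · have hc₀ : 0 ≤ c0 :=
      hg0.le_of_tendsto_mul_sub h0 differentiableOn_id (fun _ hz => hz.1)
        (by simpa using tendsto_const_nhds)
    have hmaps : MapsTo g0 (UHalf \ K2) (UHalf \ K1) := hK₁ ▸ hg0.mapsTo_diff_image_diff h2 hK₀₂
    have hsub : UHalf \ K2 ⊆ UHalf \ K0 := sdiff_subset_sdiff_right hK₀₂
    have := hg2.le_of_tendsto_mul_sub h2 (hg1.diff.comp (hg0.diff.mono hsub) hmaps)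
      (hg1.mapsTo.comp hmaps)
      ((hg0.tendsto_mul_comp_sub hg1).mono_left (inf_le_inf_left _ (principal_mono.2 hsub)))
    linarith

/-- Monotonicity of half-plane capacity: if `K₁ ⊆ K₂`, or if `K₁ ≺ K₂` (i.e. `K₁ = K₂/K₀ =
g_{K₀}(K₂ ∖ K₀)` for some hull `K₀ ⊆ K₂`), then `hcap K₁ ≤ hcap K₂`. -/
theorem hcap_mono
    (K1 K2 : Set ℂ) (g1 g2 : ℂ → ℂ) (c1 c2 : ℝ)
    (h1 : IsHHull K1) (h2 : IsHHull K2)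
    (hg1 : IsLoewnerMapOf K1 g1 c1) (hg2 : IsLoewnerMapOf K2 g2 c2) :
    (K1 ⊆ K2 → c1 ≤ c2) ∧
    (∀ (K0 : Set ℂ) (g0 : ℂ → ℂ) (c0 : ℝ), IsHHull K0 → IsLoewnerMapOf K0 g0 c0 →
      K0 ⊆ K2 → K1 = g0 '' (K2 \ K0) → c1 ≤ c2) :=
  hcap_mono_general K1 K2 g1 g2 c1 c2 h2 hg1 hg2
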